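/- Let p ≥ 1, let N* be the real vector space of p×p complex skew-Hermitian matrices with Euclidean norm ‖m‖ = (Tr(m mᴴ))^{1/2} and Lebesgue measure, and let f₀(m) = e^{-‖m‖}/‖m‖^{p²/2}. There is no g ∈ L²(N*) such that for every skew-Hermitian matrix n one has (e^{i·Tr(nm)} − 1)·f₀(m) = e^{i·Tr(nm)}·g(m) − g(m) for almost every m. In other words, the 1-cocycle β(n) = T(n)f₀ − f₀ of the representation T(n)f(m) = e^{i·Tr(nm)}f(m) is not a coboundary, so T is a special representation of N. -/

import Mathlib

open MeasureTheory Matrix Set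
open scoped ENNReal

noncomputable section

instance (p : ℕ) : MeasurableSpace (Matrix (Fin p) (Fin p) ℂ) :=
  inferInstanceAs (MeasurableSpace ((Fin p) → (Fin p) → ℂ))

instance (p : ℕ) : BorelSpace (Matrix (Fin p) (Fin p) ℂ) :=
  inferInstanceAs (BorelSpace ((Fin p) → (Fin p) → ℂ))

/-- `N*`, the real vector space of `p×p` complex skew-Hermitian matrices (`mᴴ = -m`),
of real dimension `p²`. -/
abbrev SkewHerm (p : ℕ) : Type := skewAdjoint (Matrix (Fin p) (Fin p) ℂ)

/-- The Euclidean (Frobenius) norm `‖m‖ = (Tr (m mᴴ))^{1/2}` on matrices. -/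
def matNorm {p : ℕ} (m : Matrix (Fin p) (Fin p) ℂ) : ℝ :=
  Real.sqrt ((m * mᴴ).trace.re)

/-- The function `f₀(m) = e^{-‖m‖} / ‖m‖^{p²/2}` on `N*`. -/
def f₀ (p : ℕ) (m : SkewHerm p) : ℝ :=
  Real.exp (-matNorm (m : Matrix (Fin p) (Fin p) ℂ)) /
    matNorm (m : Matrix (Fin p) (Fin p) ℂ) ^ ((p ^ 2 : ℝ) / 2)

/-- The action `m ↦ sᴴ m s` of a matrix `s` on the space `N*` of skew-Hermitian matrices. -/
def conjAct {p : ℕ} (s : Matrix (Fin p) (Fin p) ℂ) (m : SkewHerm p) : SkewHerm p :=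
  ⟨sᴴ * (m : Matrix (Fin p) (Fin p) ℂ) * s, by
    have hm : (m : Matrix (Fin p) (Fin p) ℂ)ᴴ = -(m : Matrix (Fin p) (Fin p) ℂ) := m.2
    simp [skewAdjoint.mem_iff, Matrix.star_eq_conjTranspose, Matrix.conjTranspose_mul,
      Matrix.mul_assoc, hm]⟩

/-- The operator `T_a(s) f (m) = (‖sᴴ m s‖/‖m‖)^{p²/2} · f(sᴴ m s)` associated with the
multiplicative cocycle `a(m) = ‖m‖^{p²/2}`. -/
def Ta (p : ℕ) (s : Matrix (Fin p) (Fin p) ℂ) (f : SkewHerm p → ℂ) : SkewHerm p → ℂ :=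
  fun m =>
    (((matNorm (sᴴ * (m : Matrix (Fin p) (Fin p) ℂ) * s) /
        matNorm (m : Matrix (Fin p) (Fin p) ℂ)) ^ ((p ^ 2 : ℝ) / 2) : ℝ) : ℂ) *
      f (conjAct s m)

/-!
Testing the coboundary equation at the scalar matrices `n = -t i · 1` gives
`(e^{t Tr m} - 1) (f₀ m - g m) = 0`. For `t = 1` and `t = √2` the two exponentials cannot both
equal `1` when `Tr m ≠ 0` (as `√2` is irrational), and `Tr m ≠ 0` off a proper subspace of `N*`,
so `g = f₀` almost everywhere. But `N*` has real dimension `p²` and `|f₀ m|² ≈ ‖m‖^{-p²}` near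
`0`, so `f₀ ∉ L²`.
-/

instance skewAdjoint.continuousSMul {R A : Type*} [Monoid R] [Star R] [TrivialStar R]
    [AddCommGroup A] [StarAddMonoid A] [DistribMulAction R A] [StarModule R A]
    [TopologicalSpace R] [TopologicalSpace A] [ContinuousSMul R A] :
    ContinuousSMul R (skewAdjoint A) :=
  ⟨continuous_induced_rng.2 (continuous_fst.smul (continuous_subtype_val.comp continuous_snd))⟩

instance skewAdjoint.finiteDimensional {R A : Type*} [Field R] [StarMul R] [TrivialStar R]
    [AddCommGroup A] [Module R A] [StarAddMonoid A] [StarModule R A] [FiniteDimensional R A] :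
    FiniteDimensional R (skewAdjoint A) :=
  inferInstanceAs (FiniteDimensional R (skewAdjoint.submodule R A))

section ComplexStarModule

variable {A : Type*} [AddCommGroup A] [StarAddMonoid A] [Module ℂ A] [StarModule ℂ A]
  [Module ℝ A] [IsScalarTower ℝ ℂ A] [StarModule ℝ A]

def selfAdjointEquivSkewAdjoint : selfAdjoint A ≃ₗ[ℝ] skewAdjoint A where
  toFun a := ⟨Complex.I • (a : A), a.2.I_smul_mem_skewAdjoint (K := ℂ)⟩
  invFun a := ⟨-(Complex.I • (a : A)), (IsSelfAdjoint.I_smul_of_mem_skewAdjoint a.2).neg⟩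
  map_add' a b := by ext; simp
  map_smul' r a := by ext; simp [smul_comm (r : ℝ) Complex.I]
  left_inv a := by ext; simp [smul_smul]
  right_inv a := by ext; simp [smul_smul]

theorem finrank_eq_two_mul_finrank_skewAdjoint [FiniteDimensional ℝ A] :
    Module.finrank ℝ A = 2 * Module.finrank ℝ (skewAdjoint A) := by
  rw [((StarModule.decomposeProdAdjoint ℝ A).trans
    (selfAdjointEquivSkewAdjoint.prodCongr (.refl ℝ _))).finrank_eq, Module.finrank_prod, two_mul]

end ComplexStarModule

theorem finrank_skewHerm (p : ℕ) : Module.finrank ℝ (SkewHerm p) = p ^ 2 := by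
  have := finrank_eq_two_mul_finrank_skewAdjoint (A := Matrix (Fin p) (Fin p) ℂ)
  rw [Module.finrank_matrix, Complex.finrank_real_complex, Fintype.card_fin] at this
  linarith

theorem MeasureTheory.Measure.addHaar_submodule_of_finiteDimensional {E : Type*} [AddCommGroup E]
    [Module ℝ E] [TopologicalSpace E] [IsTopologicalAddGroup E] [ContinuousSMul ℝ E] [T2Space E]
    [FiniteDimensional ℝ E] [MeasurableSpace E] [BorelSpace E] (μ : Measure E)
    [μ.IsAddHaarMeasure] (s : Submodule ℝ E) (hs : s ≠ ⊤) : μ s = 0 := by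
  let e := (Module.finBasis ℝ E).equivFunL
  have hs' : s.comap (e.symm : (Fin (Module.finrank ℝ E) → ℝ) →ₗ[ℝ] E) ≠ ⊤ := by
    refine fun h => hs (eq_top_iff.2 fun x _ => ?_)
    have hx : e x ∈ s.comap (e.symm : (Fin (Module.finrank ℝ E) → ℝ) →ₗ[ℝ] E) :=
      h ▸ Submodule.mem_top
    simpa using hx
  have h := Measure.addHaar_submodule (μ.map e) _ hs'
  rw [Measure.map_apply e.continuous.measurable
    (Submodule.closed_of_finiteDimensional _).measurableSet] at h
  simpa [Set.preimage] using h

open Module in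
theorem not_memLp_two_exp_neg_norm_div_rpow {E : Type*} [NormedAddCommGroup E] [NormedSpace ℝ E]
    [FiniteDimensional ℝ E] [Nontrivial E] [MeasurableSpace E] [BorelSpace E]
    (μ : Measure E) [μ.IsAddHaarMeasure] :
    ¬ MemLp (fun x : E => Real.exp (-‖x‖) / ‖x‖ ^ ((finrank ℝ E : ℝ) / 2)) 2 μ := by
  set d := finrank ℝ E
  have hd : 0 < d := finrank_pos
  intro hf
  have hF := (integrable_fun_norm_addHaar μ
    (f := fun y : ℝ => (Real.exp (-y) / y ^ ((d : ℝ) / 2)) ^ 2)).1 hf.integrable_sq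
  -- in polar coordinates the integrand is `e^{-2y} / y`
  have hbound : ∀ y ∈ Ioo (0 : ℝ) 1,
      y ^ (-1 : ℝ) ≤ Real.exp 2 * (y ^ (d - 1) * (Real.exp (-y) / y ^ ((d : ℝ) / 2)) ^ 2) := by
    rintro y ⟨hy0, hy1⟩
    have hyd : (y ^ ((d : ℝ) / 2)) ^ 2 = y ^ (d - 1) * y := by
      rw [← Real.rpow_mul_natCast hy0.le, ← pow_succ, Nat.sub_add_cancel hd, ← Real.rpow_natCast]
      norm_num
    rw [div_pow, hyd, ← Real.exp_nat_mul, Real.rpow_neg_one]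
    field_simp
    rw [← Real.exp_add, Real.one_le_exp_iff]
    push_cast
    linarith
  have hinv : IntegrableOn (fun y : ℝ => y ^ (-1 : ℝ)) (Ioo 0 1) :=
    ((hF.mono_set Ioo_subset_Ioi_self).const_mul (Real.exp 2)).mono'
      (by fun_prop) (ae_restrict_of_forall_mem measurableSet_Ioo fun y hy => by
        rw [Real.norm_of_nonneg (Real.rpow_nonneg hy.1.le _)]
        exact hbound y hy)
  exact lt_irrefl _ ((intervalIntegral.integrableOn_Ioo_rpow_iff one_pos).1 hinv)

theorem Matrix.re_trace_mul_conjTranspose {n : Type*} [Fintype n] (m : Matrix n n ℂ) :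
    (m * mᴴ).trace.re = ∑ i, ∑ j, ‖m i j‖ ^ 2 := by
  simp [Matrix.trace, Matrix.mul_apply, Complex.re_sum, Complex.mul_conj', ← Complex.ofReal_pow]

theorem matNorm_eq_norm_toLp {p : ℕ} (m : Matrix (Fin p) (Fin p) ℂ) :
    matNorm m = ‖WithLp.toLp 2 fun ij : Fin p × Fin p => m ij.1 ij.2‖ := by
  rw [matNorm, Matrix.re_trace_mul_conjTranspose, EuclideanSpace.norm_eq, Fintype.sum_prod_type]

namespace SkewHerm

/-- An isometric embedding of `(N*, matNorm)` into a Euclidean space: on its image `f₀` becomes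
a radial function of a genuine norm. -/
def toEuclidean (p : ℕ) : SkewHerm p →ₗ[ℝ] EuclideanSpace ℂ (Fin p × Fin p) where
  toFun m := WithLp.toLp 2 fun ij => (m : Matrix (Fin p) (Fin p) ℂ) ij.1 ij.2
  map_add' _ _ := rfl
  map_smul' _ _ := rfl

theorem norm_toEuclidean {p : ℕ} (m : SkewHerm p) :
    ‖toEuclidean p m‖ = matNorm (m : Matrix (Fin p) (Fin p) ℂ) :=
  (matNorm_eq_norm_toLp _).symm

theorem toEuclidean_injective (p : ℕ) : Function.Injective (toEuclidean p) :=
  fun _ _ h => Subtype.ext <| Matrix.ext fun i j => congrArg (fun x => x (i, j)) h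

def traceₗ (p : ℕ) : SkewHerm p →ₗ[ℝ] ℂ where
  toFun m := (m : Matrix (Fin p) (Fin p) ℂ).trace
  map_add' _ _ := Matrix.trace_add _ _
  map_smul' _ _ := Matrix.trace_smul _ _

theorem ae_trace_ne_zero {p : ℕ} (hp : 1 ≤ p) (μ : Measure (SkewHerm p))
    [μ.IsAddHaarMeasure] : ∀ᵐ m : SkewHerm p ∂μ, (m : Matrix (Fin p) (Fin p) ℂ).trace ≠ 0 := by
  have hI : Complex.I • (1 : Matrix (Fin p) (Fin p) ℂ) ∈ skewAdjoint _ := by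
    simp [skewAdjoint.mem_iff]
  have hker : LinearMap.ker (traceₗ p) ≠ ⊤ := fun h => by
    have := h.ge (Submodule.mem_top (x := ⟨_, hI⟩))
    simp [traceₗ] at this
    omega
  rw [ae_iff]
  convert Measure.addHaar_submodule_of_finiteDimensional μ _ hker using 2
  ext m
  simp [traceₗ]

end SkewHerm

open Module in
theorem not_memLp_f₀ {p : ℕ} (hp : 1 ≤ p) (μ : Measure (SkewHerm p)) [μ.IsAddHaarMeasure] :
    ¬ MemLp (fun m => (f₀ p m : ℂ)) 2 μ := by
  intro hf
  let e := (LinearEquiv.ofInjective _ (SkewHerm.toEuclidean_injective p)).toContinuousLinearEquiv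
  have hdim : finrank ℝ (LinearMap.range (SkewHerm.toEuclidean p)) = p ^ 2 :=
    e.toLinearEquiv.finrank_eq.symm.trans (finrank_skewHerm p)
  have : Nontrivial (LinearMap.range (SkewHerm.toEuclidean p)) :=
    Module.nontrivial_of_finrank_pos (by rw [hdim]; positivity)
  refine not_memLp_two_exp_neg_norm_div_rpow (μ.map e)
    (e.toHomeomorph.measurableEmbedding.memLp_map_measure_iff.2 ?_)
  have hf' : MemLp (fun m => f₀ p m) 2 μ := by simpa using hf.re
  convert hf' using 2 with m
  rw [f₀, ← SkewHerm.norm_toEuclidean, hdim]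
  push_cast
  rfl

theorem Complex.exp_ne_one_or_exp_sqrt_two_mul_ne_one {z : ℂ} (hz : z ≠ 0) :
    exp z ≠ 1 ∨ exp (√2 * z) ≠ 1 := by
  by_contra! h
  obtain ⟨k, hk⟩ := exp_eq_one_iff.1 h.1
  obtain ⟨l, hl⟩ := exp_eq_one_iff.1 h.2
  have hk0 : k ≠ 0 := by rintro rfl; simp [hk] at hz
  have h2π : 2 * Real.pi * I ≠ 0 := by simp [Real.pi_ne_zero]
  have hkl : ((√2 * k : ℝ) : ℂ) = (l : ℝ) := by
    push_cast
    apply mul_right_cancel₀ h2π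
    rw [mul_assoc, ← hk, hl]
  exact (irrational_sqrt_two.mul_intCast hk0).ne_int l (by exact_mod_cast hkl)

theorem cocycle_beta_not_coboundary (p : ℕ) (hp : 1 ≤ p)
    (μ : Measure (SkewHerm p)) [μ.IsAddHaarMeasure] :
    ¬ ∃ g : SkewHerm p → ℂ, MemLp g 2 μ ∧
      ∀ n : Matrix (Fin p) (Fin p) ℂ, nᴴ = -n →
        ∀ᵐ (m : SkewHerm p) ∂μ,
          (Complex.exp (Complex.I * (n * (m : Matrix (Fin p) (Fin p) ℂ)).trace) - 1) *
              (f₀ p m : ℂ)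
            = Complex.exp (Complex.I * (n * (m : Matrix (Fin p) (Fin p) ℂ)).trace) * g m
                - g m := by
  rintro ⟨g, hg, hcob⟩
  have hscalar (t : ℝ) : ∀ᵐ m : SkewHerm p ∂μ,
      (Complex.exp (t * (m : Matrix (Fin p) (Fin p) ℂ).trace) - 1) * (f₀ p m : ℂ) =
        Complex.exp (t * (m : Matrix (Fin p) (Fin p) ℂ).trace) * g m - g m := by
    have hskew : ((-(t * Complex.I)) • (1 : Matrix (Fin p) (Fin p) ℂ))ᴴ =
        -((-(t * Complex.I)) • 1) := by
      simp [Matrix.conjTranspose_smul]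
    have hexp (m : Matrix (Fin p) (Fin p) ℂ) :
        Complex.I * ((-(t * Complex.I)) • 1 * m).trace = t * m.trace := by
      rw [Matrix.smul_mul, Matrix.one_mul, Matrix.trace_smul, smul_eq_mul]
      linear_combination -(t * m.trace) * Complex.I_sq
    simpa only [hexp] using hcob _ hskew
  refine not_memLp_f₀ hp μ (hg.ae_eq ?_)
  filter_upwards [hscalar 1, hscalar √2, SkewHerm.ae_trace_ne_zero hp μ] with m h₁ h₂ htr
  have hcancel {E : ℂ} (hE : E ≠ 1) (h : (E - 1) * (f₀ p m : ℂ) = E * g m - g m) :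
      g m = f₀ p m :=
    mul_left_cancel₀ (sub_ne_zero.2 hE) (by linear_combination -h)
  rcases Complex.exp_ne_one_or_exp_sqrt_two_mul_ne_one htr with hE | hE
  · exact hcancel hE (by simpa using h₁)
  · exact hcancel hE h₂

end
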